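/- For every integer k ≥ 2 and every ε > 0, the preimage p⁻¹((−ε, ε)) of the open interval (−ε, ε) under the canonical projection p : L_k^♯ → ℝ is a connected subset of L_k^♯; consequently p⁻¹((−ε, ε)) cannot be written as a disjoint union of two nonempty open sets, and in particular cannot be split into disjoint open sheets each mapped homeomorphically onto (−ε, ε). -/

import Mathlib

/-- The gluing relation on `Fin k × ℝ`: `(i,x) ∼ (j,y)` iff `x = y` and
(`x ≠ 0` or `i = j`), i.e. all non-zero points are glued and the origins stay apart. -/
def lineSetoid (k : ℕ) : Setoid (Fin k × ℝ) where
  r p q := p.2 = q.2 ∧ (p.2 ≠ 0 ∨ p.1 = q.1)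
  iseqv := by
    constructor
    · exact fun p => ⟨rfl, Or.inr rfl⟩
    · rintro p q ⟨h1, h2⟩
      refine ⟨h1.symm, ?_⟩
      rcases h2 with h | h
      · exact Or.inl (h1 ▸ h)
      · exact Or.inr h.symm
    · rintro p q r ⟨h1, h2⟩ ⟨h3, h4⟩
      refine ⟨h1.trans h3, ?_⟩
      rcases h2 with h | h
      · exact Or.inl h
      · rcases h4 with h' | h'
        · exact Or.inl (h1.symm ▸ h')
        · exact Or.inr (h.trans h')

/-- The line with `k` (inseparable) origins `L_k^♯`, as a quotient of `Fin k × ℝ`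
equipped with the quotient topology. -/
def LineK (k : ℕ) : Type := Quotient (lineSetoid k)

instance (k : ℕ) : TopologicalSpace (LineK k) :=
  inferInstanceAs (TopologicalSpace (Quotient (lineSetoid k)))

/-- `[x]_i`, the class of the point `x` on the `i`-th copy of `ℝ`. -/
def LineK.mk (k : ℕ) (i : Fin k) (x : ℝ) : LineK k := Quotient.mk (lineSetoid k) (i, x)

/-- The `i`-th origin `o_i = [0]_i`. -/
def LineK.origin (k : ℕ) (i : Fin k) : LineK k := LineK.mk k i 0

/-- The canonical projection `p : L_k^♯ → ℝ`, `[x]_i ↦ x`. -/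
def LineK.proj (k : ℕ) : LineK k → ℝ :=
  Quotient.lift (fun p => p.2) (fun _ _ h => h.1)

/-!
Every copy `i ↦ [x]_i` of `(−ε, ε)` is a connected subset of `L_k^♯`, and all copies share the
point `[ε/2]`, so their union `p⁻¹((−ε, ε))` is connected. A connected set covered by disjoint open
sheets lies in a single sheet, on which `p` would be injective; but the two origins `o_0 ≠ o_1`
both lie over `0`.
-/

open Set

section Connected

variable {X : Type*} [TopologicalSpace X] {s : Set X}

theorem IsPreconnected.ne_union_of_disjoint_isOpen (hs : IsPreconnected s) {U V : Set X}
    (hU : IsOpen U) (hV : IsOpen V) (hUne : U.Nonempty) (hVne : V.Nonempty)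
    (hUV : Disjoint U V) : s ≠ U ∪ V := by
  rintro rfl
  have hUV_sub : U ∪ V ⊆ U := hs.subset_left_of_subset_union hU hV hUV subset_rfl
    (by simpa [inter_eq_right.2 subset_union_left] using hUne)
  exact hVne.ne_empty (hUV.symm.eq_bot_of_le (subset_union_right.trans hUV_sub))

theorem IsPreconnected.subset_of_pairwise_disjoint_isOpen (hs : IsPreconnected s) {ι : Type*}
    {S : ι → Set X} (hopen : ∀ a, IsOpen (S a)) (hdisj : Pairwise (Function.onFun Disjoint S))
    (hcover : s ⊆ ⋃ a, S a) {a : ι} {x : X} (hxs : x ∈ s) (hxa : x ∈ S a) : s ⊆ S a := by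
  refine hs.subset_left_of_subset_union (v := ⋃ c ∈ ({a}ᶜ : Set ι), S c) (hopen a)
    (isOpen_biUnion fun c _ => hopen c) ?_ ?_ ⟨x, hxs, hxa⟩
  · exact disjoint_iUnion₂_right.2 fun c hc => hdisj (Ne.symm hc)
  · intro y hy
    obtain ⟨c, hc⟩ := mem_iUnion.1 (hcover hy)
    by_cases hca : c = a
    · exact Or.inl (hca ▸ hc)
    · exact Or.inr (mem_biUnion hca hc)

theorem IsPreconnected.injOn_of_eq_iUnion {Y : Type*} (hs : IsPreconnected s) {f : X → Y}
    {ι : Type*} {S : ι → Set X} (hopen : ∀ a, IsOpen (S a))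
    (hdisj : Pairwise (Function.onFun Disjoint S)) (hcover : s = ⋃ a, S a) (hinj : ∀ a, InjOn f (S a)) : InjOn f s := by
  intro x hx y hy hxy
  obtain ⟨a, hxa⟩ := mem_iUnion.1 (hcover ▸ hx)
  have hsub := hs.subset_of_pairwise_disjoint_isOpen hopen hdisj hcover.subset hx hxa
  exact hinj a (hsub hx) (hsub hy) hxy

end Connected

theorem Homeomorph.injOn_of_coe_apply {X Y : Type*} [TopologicalSpace X] [TopologicalSpace Y]
    {S : Set X} {T : Set Y} (e : S ≃ₜ T) {f : X → Y} (he : ∀ q, (e q : Y) = f q) : InjOn f S := by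
  intro x hx y hy hxy
  have : e ⟨x, hx⟩ = e ⟨y, hy⟩ := Subtype.ext (by rw [he, he, hxy])
  exact congrArg Subtype.val (e.injective this)

namespace LineK

theorem continuous_mk (k : ℕ) (i : Fin k) : Continuous (mk k i) :=
  continuous_quot_mk.comp (Continuous.prodMk_right i)

theorem mk_eq_mk_of_ne_zero (k : ℕ) (i j : Fin k) {x : ℝ} (hx : x ≠ 0) :
    mk k i x = mk k j x :=
  Quotient.sound ⟨rfl, Or.inl hx⟩

theorem origin_injective (k : ℕ) : Function.Injective (origin k) := fun _ _ h =>
  (Quotient.exact h).2.resolve_left (not_not_intro rfl)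

theorem proj_origin (k : ℕ) (i : Fin k) : proj k (origin k i) = 0 := rfl

theorem preimage_proj_eq_iUnion (k : ℕ) (s : Set ℝ) :
    proj k ⁻¹' s = ⋃ i : Fin k, mk k i '' s := by
  ext q
  obtain ⟨⟨i, x⟩, rfl⟩ := Quotient.exists_rep q
  refine ⟨fun hq => mem_iUnion.2 ⟨i, x, hq, rfl⟩, fun hq => ?_⟩
  obtain ⟨j, y, hy, hyq⟩ := mem_iUnion.1 hq
  rw [← hyq]
  exact hy

theorem isConnected_preimage_proj (k : ℕ) [NeZero k] {s : Set ℝ} (hs : IsPreconnected s)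
    {x : ℝ} (hxs : x ∈ s) (hx : x ≠ 0) : IsConnected (proj k ⁻¹' s) := by
  have hcommon : ∀ i : Fin k, mk k 0 x ∈ mk k i '' s := fun i =>
    ⟨x, hxs, mk_eq_mk_of_ne_zero k i 0 hx⟩
  rw [preimage_proj_eq_iUnion]
  refine ⟨⟨_, mem_iUnion.2 ⟨0, hcommon 0⟩⟩, isPreconnected_iUnion ?_ ?_⟩
  · exact ⟨_, mem_iInter.2 hcommon⟩
  · exact fun i => hs.image _ (continuous_mk k i).continuousOn

end LineK

/-- For every integer `k ≥ 2` and every `ε > 0`, the preimage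
`p⁻¹((−ε, ε))` is connected; consequently it is not a disjoint union of two
nonempty open sets, and in particular it cannot be split into disjoint open
sheets each mapped homeomorphically by `p` onto `(−ε, ε)`. -/
theorem stmt13 (k : ℕ) (hk : 2 ≤ k) (ε : ℝ) (hε : 0 < ε) :
    IsConnected (LineK.proj k ⁻¹' Set.Ioo (-ε) ε) ∧
    (¬ ∃ U V : Set (LineK k), IsOpen U ∧ IsOpen V ∧ U.Nonempty ∧ V.Nonempty ∧
        Disjoint U V ∧ LineK.proj k ⁻¹' Set.Ioo (-ε) ε = U ∪ V) ∧
    (¬ ∃ (ι : Type) (S : ι → Set (LineK k)), (∀ a, IsOpen (S a)) ∧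
        Pairwise (Function.onFun Disjoint S) ∧
        LineK.proj k ⁻¹' Set.Ioo (-ε) ε = ⋃ a, S a ∧
        ∀ a, ∃ e : (S a) ≃ₜ (Set.Ioo (-ε) ε),
          ∀ q, (e q : ℝ) = LineK.proj k q) := by
  have : NeZero k := ⟨by omega⟩
  have hconn : IsConnected (LineK.proj k ⁻¹' Ioo (-ε) ε) :=
    LineK.isConnected_preimage_proj k isPreconnected_Ioo
      (x := ε / 2) ⟨by linarith, by linarith⟩ (by positivity)
  refine ⟨hconn, ?_, ?_⟩
  · rintro ⟨U, V, hU, hV, hUne, hVne, hUV, heq⟩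
    exact hconn.isPreconnected.ne_union_of_disjoint_isOpen hU hV hUne hVne hUV heq
  · rintro ⟨ι, S, hopen, hdisj, hcover, hsheet⟩
    have hinj := hconn.isPreconnected.injOn_of_eq_iUnion hopen hdisj hcover fun a =>
      (hsheet a).elim fun e he => e.injOn_of_coe_apply he
    have horigin : ∀ i, LineK.origin k i ∈ LineK.proj k ⁻¹' Ioo (-ε) ε := fun i =>
      ⟨neg_lt_zero.2 hε, hε⟩
    have : Nontrivial (Fin k) := Fin.nontrivial_iff_two_le.2 hk
    obtain ⟨i, j, hij⟩ := exists_pair_ne (Fin k)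
    exact hij (LineK.origin_injective k
      (hinj (horigin i) (horigin j) ((LineK.proj_origin k i).trans (LineK.proj_origin k j).symm)))
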